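/- The function u(x,t) = 10 − (1/2)·cos(5 + t) + 4·tanh(6 + 1.6·t − 0.4·x − (2/25)·sin(5 + t)) solves the variable-coefficient forced Burgers equation u_t + (2/5)·u·u_x − 2·u_xx = (1/2)·sin(5 + t) for all (x,t) ∈ ℝ². (This is the vc-FBE with nonlinear coefficient a = 2/5, dispersive coefficient b = −2 and external-force term m(t) = (1/2)·sin(t + 5), arising from the parameter choice b1 = 0, b2 = −2, m(t) = (1/2)·sin(t+5), p = −5, q = 10, L = 4, w = 6 in the general solution formula.) -/

import Mathlib

/-!
The solution is a `tanh` kink `u = A(t) + L tanh(κx + φ(t))` with `A(t) = 10 - cos(5 + t)/2`,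
`φ(t) = 6 + 1.6t - (2/25) sin(5 + t)`, `κ = -0.4`, `L = 4`. Writing `T = tanh(κx + φ)` and
`S = 1 - T²`, one has `u_x = LκS` and `u_xx = -2Lκ²TS`, so
`u_t + a u u_x + b u_xx = A' + L S (φ' + aκA) + LκTS (aL - 2bκ)`.
For `a = 2/5`, `b = -2` both brackets vanish identically, leaving the forcing `A' = sin(5 + t)/2`.
-/

open Real

theorem Real.hasDerivAt_tanh (y : ℝ) : HasDerivAt tanh (1 - tanh y ^ 2) y := by
  have h := (hasDerivAt_sinh y).div (hasDerivAt_cosh y) (cosh_pos y).ne'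
  rw [show sinh / cosh = tanh from funext fun z => (tanh_eq_sinh_div_cosh z).symm] at h
  refine h.congr_deriv ?_
  rw [tanh_eq_sinh_div_cosh]
  field_simp

theorem HasDerivAt.tanh {f : ℝ → ℝ} {f' y : ℝ} (hf : HasDerivAt f f' y) :
    HasDerivAt (fun z => Real.tanh (f z)) ((1 - Real.tanh (f y) ^ 2) * f') y :=
  (hasDerivAt_tanh (f y)).comp y hf

def SolvesForcedBurgers (a b m : ℝ → ℝ → ℝ) (u : ℝ → ℝ → ℝ) : Prop :=
  ∀ x t, deriv (fun t' => u x t') t + a x t * u x t * deriv (fun x' => u x' t) x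
    + b x t * deriv (deriv fun x' => u x' t) x = m x t

noncomputable def tanhKink (A φ : ℝ → ℝ) (κ L : ℝ) (x t : ℝ) : ℝ := A t + L * tanh (κ * x + φ t)

section tanhKink

variable {A φ : ℝ → ℝ} {κ L : ℝ}

theorem hasDerivAt_tanhKink_x (x t : ℝ) :
    HasDerivAt (fun x' => tanhKink A φ κ L x' t)
      (L * κ * (1 - tanh (κ * x + φ t) ^ 2)) x := by
  have h := ((((hasDerivAt_id' x).const_mul κ).add_const (φ t)).tanh.const_mul L).const_add (A t)
  refine h.congr_deriv ?_
  ring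

theorem deriv_tanhKink_x (t : ℝ) :
    deriv (fun x' => tanhKink A φ κ L x' t) =
      fun x => L * κ * (1 - tanh (κ * x + φ t) ^ 2) :=
  funext fun x => (hasDerivAt_tanhKink_x x t).deriv

theorem deriv_deriv_tanhKink_x (x t : ℝ) :
    deriv (deriv fun x' => tanhKink A φ κ L x' t) x =
      -2 * L * κ ^ 2 * tanh (κ * x + φ t) * (1 - tanh (κ * x + φ t) ^ 2) := by
  have h := (((((hasDerivAt_id' x).const_mul κ).add_const (φ t)).tanh.fun_pow 2).const_sub 1
    ).const_mul (L * κ)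
  rw [deriv_tanhKink_x, h.deriv]
  ring

theorem hasDerivAt_tanhKink_t {A' φ' : ℝ} (x t : ℝ) (hA : HasDerivAt A A' t)
    (hφ : HasDerivAt φ φ' t) :
    HasDerivAt (fun t' => tanhKink A φ κ L x t')
      (A' + L * φ' * (1 - tanh (κ * x + φ t) ^ 2)) t := by
  have h := hA.add ((hφ.const_add (κ * x)).tanh.const_mul L)
  refine h.congr_deriv ?_
  ring

theorem tanhKink_solvesForcedBurgers {A' φ' : ℝ → ℝ} {a b : ℝ → ℝ → ℝ}
    (hA : ∀ t, HasDerivAt A (A' t) t) (hφ : ∀ t, HasDerivAt φ (φ' t) t)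
    (hamp : ∀ x t, a x t * L = 2 * b x t * κ) (hphase : ∀ x t, φ' t + a x t * κ * A t = 0) :
    SolvesForcedBurgers a b (fun _ t => A' t) (tanhKink A φ κ L) := by
  intro x t
  rw [(hasDerivAt_tanhKink_t x t (hA t) (hφ t)).deriv, (hasDerivAt_tanhKink_x x t).deriv,
    deriv_deriv_tanhKink_x, tanhKink]
  linear_combination L * (1 - tanh (κ * x + φ t) ^ 2) * hphase x t
    + L * κ * tanh (κ * x + φ t) * (1 - tanh (κ * x + φ t) ^ 2) * hamp x t

end tanhKink

/-- `u(x,t) = 10 − (1/2)·cos(5+t) + 4·tanh(6 + 1.6t − 0.4x − (2/25)·sin(5+t))`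
solves the forced equation `u_t + (2/5)·u·u_x − 2·u_xx = (1/2)·sin(5+t)` on all of ℝ². -/
theorem example3_solves_vcFBE :
    ∀ x t : ℝ,
      deriv (fun t' => 10 - (1 / 2) * Real.cos (5 + t')
          + 4 * Real.tanh (6 + 1.6 * t' - 0.4 * x - (2 / 25) * Real.sin (5 + t'))) t
        + (2 / 5) * (10 - (1 / 2) * Real.cos (5 + t)
            + 4 * Real.tanh (6 + 1.6 * t - 0.4 * x - (2 / 25) * Real.sin (5 + t)))
            * deriv (fun x' => 10 - (1 / 2) * Real.cos (5 + t)
                + 4 * Real.tanh (6 + 1.6 * t - 0.4 * x' - (2 / 25) * Real.sin (5 + t))) x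
        - 2 * deriv (deriv (fun x' => 10 - (1 / 2) * Real.cos (5 + t)
                + 4 * Real.tanh (6 + 1.6 * t - 0.4 * x' - (2 / 25) * Real.sin (5 + t)))) x
        = (1 / 2) * Real.sin (5 + t) := by
  set A : ℝ → ℝ := fun t => 10 - (1 / 2) * cos (5 + t)
  set φ : ℝ → ℝ := fun t => 6 + 1.6 * t - (2 / 25) * sin (5 + t)
  have hA (t : ℝ) : HasDerivAt A ((1 / 2) * sin (5 + t)) t := by
    refine (((hasDerivAt_id' t).const_add 5).cos.const_mul (1 / 2)).const_sub 10 |>.congr_deriv ?_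
    ring
  have hφ (t : ℝ) : HasDerivAt φ (1.6 - (2 / 25) * cos (5 + t)) t := by
    refine (((hasDerivAt_id' t).const_mul 1.6).const_add 6).sub
      (((hasDerivAt_id' t).const_add 5).sin.const_mul (2 / 25)) |>.congr_deriv ?_
    ring
  have hu (x t : ℝ) : tanhKink A φ (-0.4) 4 x t = 10 - (1 / 2) * cos (5 + t)
      + 4 * tanh (6 + 1.6 * t - 0.4 * x - (2 / 25) * sin (5 + t)) := by
    simp only [tanhKink, A, φ]
    ring_nf
  intro x t
  have h := tanhKink_solvesForcedBurgers (κ := -0.4) (L := 4) (a := fun _ _ => 2 / 5)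
    (b := fun _ _ => -2) hA hφ (fun _ _ => by norm_num) (fun _ t => by simp only [A]; ring) x t
  simp only [hu] at h
  linarith
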